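/- Let S be a finite set of points in ℝ^d, let A be the set of vertices of conv(S), and let B = S \ A be nonempty with |B| ≥ d. If H is the supporting hyperplane of a (d-1)-dimensional face of conv(B), with H⁺ the closed halfspace containing B, then the set conv(S) ∩ cl(H⁻) is a convex body whose interior contains no point of S. -/

import Mathlib

open scoped RealInnerProductSpace

/-! A point of `A` is an extreme point of `conv S`, and extreme points never lie in the interior
of a subset of `conv S`. A point of `B` satisfies `c ≤ ⟪u, p⟫`, whereas the interior of the
halfspace `⟪u, ·⟫ ≤ c` is the open halfspace `⟪u, ·⟫ < c`. -/

section HalfSpace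

variable {E : Type*} [NormedAddCommGroup E] [InnerProductSpace ℝ E]

theorem interior_setOf_inner_le {u : E} (hu : u ≠ 0) (c : ℝ) :
    interior {x : E | ⟪u, x⟫ ≤ c} = {x | ⟪u, x⟫ < c} := by
  have hf : innerSL ℝ u ≠ 0 := fun h => hu (by simpa using congrArg norm h)
  have := ((innerSL ℝ u).isOpenMap_of_ne_zero hf).preimage_interior_eq_interior_preimage
    (innerSL ℝ u).continuous (Set.Iic c)
  rw [interior_Iic] at this
  exact this.symm

theorem convex_inter_setOf_inner_le {K : Set E} (hK : Convex ℝ K) (u : E) (c : ℝ) :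
    Convex ℝ (K ∩ {x | ⟪u, x⟫ ≤ c}) :=
  hK.inter (convex_halfSpace_le (innerₛₗ ℝ u).isLinear c)

theorem IsCompact.inter_setOf_inner_le {K : Set E} (hK : IsCompact K) (u : E) (c : ℝ) :
    IsCompact (K ∩ {x | ⟪u, x⟫ ≤ c}) :=
  hK.inter_right (isClosed_le (innerSL ℝ u).continuous continuous_const)

theorem notMem_interior_inter_setOf_inner_le_of_le {K : Set E} {u x : E} (hu : u ≠ 0) {c : ℝ}
    (hx : c ≤ ⟪u, x⟫) : x ∉ interior (K ∩ {y | ⟪u, y⟫ ≤ c}) := by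
  intro hint
  have hlt := interior_mono Set.inter_subset_right hint
  rw [interior_setOf_inner_le hu] at hlt
  exact (show ⟪u, x⟫ < c from hlt).not_ge hx

theorem notMem_interior_inter_of_mem_extremePoints [Nontrivial E] {K L : Set E} {x : E}
    (hx : x ∈ Set.extremePoints ℝ K) : x ∉ interior (K ∩ L) := fun hint =>
  Set.disjoint_left.1 (disjoint_interior_extremePoints K)
    (interior_mono Set.inter_subset_left hint) hx

end HalfSpace

theorem slice_step_empty_general (d : ℕ)
    (S A B : Finset (EuclideanSpace ℝ (Fin d)))
    (hA : (A : Set (EuclideanSpace ℝ (Fin d))) =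
      (S : Set (EuclideanSpace ℝ (Fin d))) ∩
        Set.extremePoints ℝ (convexHull ℝ (S : Set (EuclideanSpace ℝ (Fin d)))))
    (hB : (B : Set (EuclideanSpace ℝ (Fin d))) = (S : Set (EuclideanSpace ℝ (Fin d))) \ (A : Set (EuclideanSpace ℝ (Fin d))))
    (u : EuclideanSpace ℝ (Fin d)) (hu : u ≠ 0) (c : ℝ)
    (hsupp : ∀ b ∈ B, c ≤ ⟪u, b⟫) :
    Convex ℝ (convexHull ℝ (S : Set (EuclideanSpace ℝ (Fin d))) ∩ {x | ⟪u, x⟫ ≤ c}) ∧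
    IsCompact (convexHull ℝ (S : Set (EuclideanSpace ℝ (Fin d))) ∩ {x | ⟪u, x⟫ ≤ c}) ∧
    ∀ p ∈ S, p ∉ interior (convexHull ℝ (S : Set (EuclideanSpace ℝ (Fin d))) ∩
      {x | ⟪u, x⟫ ≤ c}) := by
  refine ⟨convex_inter_setOf_inner_le (convex_convexHull ℝ _) u c,
    (S.finite_toSet.isCompact_convexHull (𝕜 := ℝ)).inter_setOf_inner_le u c, fun p hpS => ?_⟩
  by_cases hpA : p ∈ (A : Set (EuclideanSpace ℝ (Fin d)))
  · have : Nontrivial (EuclideanSpace ℝ (Fin d)) := nontrivial_of_ne u 0 hu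
    rw [hA] at hpA
    exact notMem_interior_inter_of_mem_extremePoints hpA.2
  · have hpB : p ∈ (B : Set (EuclideanSpace ℝ (Fin d))) := hB ▸ ⟨hpS, hpA⟩
    exact notMem_interior_inter_setOf_inner_le_of_le hu (hsupp p hpB)

/-- One step of the greedy slicing algorithm. Let `A` be the set of vertices
(extreme points) of `conv S`, `B = S \ A` with `|B| ≥ d`. Let
`H = {x | ⟪u,x⟫ = c}` be the supporting hyperplane of a `(d-1)`-dimensional
face of `conv B`, with `B` contained in the halfspace `{x | c ≤ ⟪u,x⟫}`.
Then `conv(S) ∩ {x | ⟪u,x⟫ ≤ c}` is a convex body whose interior contains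
no point of `S`. -/
theorem slice_step_empty (d : ℕ) (hd : 0 < d)
    (S A B : Finset (EuclideanSpace ℝ (Fin d)))
    (hA : (A : Set (EuclideanSpace ℝ (Fin d))) =
      (S : Set (EuclideanSpace ℝ (Fin d))) ∩
        Set.extremePoints ℝ (convexHull ℝ (S : Set (EuclideanSpace ℝ (Fin d)))))
    (hB : (B : Set (EuclideanSpace ℝ (Fin d))) = (S : Set (EuclideanSpace ℝ (Fin d))) \ (A : Set (EuclideanSpace ℝ (Fin d)))) (hBne : B.Nonempty) (hBcard : d ≤ B.card)
    (u : EuclideanSpace ℝ (Fin d)) (hu : u ≠ 0) (c : ℝ)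
    (hsupp : ∀ b ∈ B, c ≤ ⟪u, b⟫)
    -- `H` supports a `(d-1)`-dimensional face of `conv B`: it contains
    -- `d` affinely independent points of `B`.
    (hface : ∃ p : Fin d → EuclideanSpace ℝ (Fin d), AffineIndependent ℝ p ∧
      ∀ i, p i ∈ (B : Set (EuclideanSpace ℝ (Fin d))) ∧ ⟪u, p i⟫ = c) :
    Convex ℝ (convexHull ℝ (S : Set (EuclideanSpace ℝ (Fin d))) ∩ {x | ⟪u, x⟫ ≤ c}) ∧
    IsCompact (convexHull ℝ (S : Set (EuclideanSpace ℝ (Fin d))) ∩ {x | ⟪u, x⟫ ≤ c}) ∧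
    ∀ p ∈ S, p ∉ interior (convexHull ℝ (S : Set (EuclideanSpace ℝ (Fin d))) ∩
      {x | ⟪u, x⟫ ≤ c}) :=
  slice_step_empty_general d S A B hA hB u hu c hsupp
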